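/- Let q be a prime power, let G be a point of PG(2,q), let ℓ₁, …, ℓ_{q+1} be the q+1 lines through G, and let 1 ≤ b ≤ q−1. Let S be the union of ℓ₁, …, ℓ_q together with b points of ℓ_{q+1} \ {G}. Then #S = 1 + q² + b, and every point Q ∈ PG(2,q) \ S lies on exactly C(b+1,2) + q·C(q,2) unordered pairs of distinct points of S collinear with Q; hence S is a (1, C(b+1,2)+q·C(q,2))-OS set. -/

import Mathlib

open Module

/-- Points of `PG(N,q)`: 1-dimensional subspaces of `F^(N+1)`. -/
abbrev PGPoint (F : Type) [Field F] (N : ℕ) :=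
  {W : Submodule F (Fin (N + 1) → F) // Module.finrank F W = 1}

/-- Lines of `PG(N,q)`: 2-dimensional subspaces of `F^(N+1)`. -/
abbrev PGLine (F : Type) [Field F] (N : ℕ) :=
  {W : Submodule F (Fin (N + 1) → F) // Module.finrank F W = 2}

/-- The number of points of `S` lying on the line `L`. -/
noncomputable def lineCount {F : Type} [Field F] {N : ℕ}
    (S : Set (PGPoint F N)) (L : PGLine F N) : ℕ :=
  {P : PGPoint F N | P ∈ S ∧ P.1 ≤ L.1}.ncard

/-- The number of unordered pairs of distinct points of `S` collinear with `Q`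
(the number of secants of `S` through `Q`, counted with multiplicity). -/
noncomputable def pairCount {F : Type} [Field F] {N : ℕ}
    (S : Set (PGPoint F N)) (Q : PGPoint F N) : ℕ :=
  {e : Set (PGPoint F N) |
    ∃ A ∈ S, ∃ B ∈ S, A ≠ B ∧ e = {A, B} ∧ Q.1 ≤ A.1 ⊔ B.1}.ncard

/-- `S` spans (generates) `PG(N,q)`. -/
def Spans {F : Type} [Field F] {N : ℕ} (S : Set (PGPoint F N)) : Prop :=
  (⨆ P ∈ S, P.1) = ⊤

/-- `S` is a `(1,μ)`-saturating set. -/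
def IsSaturating {F : Type} [Field F] {N : ℕ} (S : Set (PGPoint F N)) (μ : ℕ) : Prop :=
  Spans S ∧ S ≠ Set.univ ∧ ∀ Q : PGPoint F N, Q ∉ S → μ ≤ pairCount S Q

/-- `S` is an optimal `(1,μ)`-saturating set (`(1,μ)`-OS set). -/
def IsOS {F : Type} [Field F] {N : ℕ} (S : Set (PGPoint F N)) (μ : ℕ) : Prop :=
  Spans S ∧ S ≠ Set.univ ∧ ∀ Q : PGPoint F N, Q ∉ S → pairCount S Q = μ

/-- `S` is a minimal `(1,μ)`-saturating set: no proper subset is `(1,μ)`-saturating. -/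
def IsMinimalSaturating {F : Type} [Field F] {N : ℕ} (S : Set (PGPoint F N)) (μ : ℕ) : Prop :=
  IsSaturating S μ ∧ ∀ T : Set (PGPoint F N), T ⊂ S → ¬ IsSaturating T μ

/-!
Off `ℓ*`, the set `S` contains every point, and on `ℓ*` exactly the `b + 1` points of
`{G} ∪ B`. A point `Q ∉ S` therefore lies on `ℓ*`, and the pairs of `S` collinear with `Q`
are partitioned by the `q + 1` lines through `Q`: the line `ℓ*` carries `b + 1` points of `S`,
and each of the other `q` lines meets `ℓ*` only in `Q`, so it carries its `q` remaining points.
-/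

namespace Submodule

variable {K V : Type*} [DivisionRing K] [AddCommGroup V] [Module K V] [FiniteDimensional K V]

theorem finrank_sup_eq_two {P Q : Submodule K V} (hP : finrank K P = 1) (hQ : finrank K Q = 1)
    (hPQ : P ≠ Q) : finrank K ↥(P ⊔ Q) = 2 := by
  have hlt : P < P ⊔ Q := lt_of_le_of_ne le_sup_left fun h =>
    hPQ (eq_of_le_of_finrank_eq (h ▸ le_sup_right) (hQ.trans hP.symm)).symm
  have := finrank_lt_finrank_of_lt hlt
  have := finrank_add_le_finrank_add_finrank P Q
  omega

theorem sup_eq_of_le_of_finrank_eq_two {P Q L : Submodule K V} (hP : finrank K P = 1)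
    (hQ : finrank K Q = 1) (hL : finrank K L = 2) (hPQ : P ≠ Q) (hPL : P ≤ L) (hQL : Q ≤ L) :
    P ⊔ Q = L :=
  eq_of_le_of_finrank_eq (sup_le hPL hQL) ((finrank_sup_eq_two hP hQ hPQ).trans hL.symm)

theorem finrank_inf_le_one {L M : Submodule K V} (hL : finrank K L = 2) (hM : finrank K M = 2)
    (hLM : L ≠ M) : finrank K ↥(L ⊓ M) ≤ 1 := by
  have hlt : L ⊓ M < L := lt_of_le_of_ne inf_le_left fun h =>
    hLM (eq_of_le_of_finrank_eq (h ▸ inf_le_right) (hL.trans hM.symm))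
  have := finrank_lt_finrank_of_lt hlt
  omega

theorem eq_of_le_inf_of_finrank_eq_one {L M P Q : Submodule K V} (hL : finrank K L = 2)
    (hM : finrank K M = 2) (hLM : L ≠ M) (hP : finrank K P = 1) (hQ : finrank K Q = 1)
    (hPLM : P ≤ L ⊓ M) (hQLM : Q ≤ L ⊓ M) : P = Q := by
  have hinf := finrank_inf_le_one hL hM hLM
  have hPinf := eq_of_le_of_finrank_eq hPLM (by have := finrank_mono hPLM; omega)
  have hQinf := eq_of_le_of_finrank_eq hQLM (by have := finrank_mono hQLM; omega)
  exact hPinf.trans hQinf.symm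

theorem one_le_finrank_inf (hV : finrank K V = 3) {L M : Submodule K V} (hL : finrank K L = 2)
    (hM : finrank K M = 2) : 1 ≤ finrank K ↥(L ⊓ M) := by
  have := finrank_sup_add_finrank_inf_eq L M
  have := (L ⊔ M).finrank_le
  omega

end Submodule

namespace PGPoint

variable {F : Type} [Field F] {N : ℕ}

def join (P Q : PGPoint F N) (h : P ≠ Q) : PGLine F N :=
  ⟨P.1 ⊔ Q.1, Submodule.finrank_sup_eq_two P.2 Q.2 (Subtype.val_injective.ne h)⟩

theorem join_eq {P Q : PGPoint F N} (h : P ≠ Q) {L : PGLine F N} (hP : P.1 ≤ L.1)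
    (hQ : Q.1 ≤ L.1) : join P Q h = L :=
  Subtype.ext <|
    Submodule.sup_eq_of_le_of_finrank_eq_two P.2 Q.2 L.2 (Subtype.val_injective.ne h) hP hQ

theorem eq_of_le_of_le {P Q : PGPoint F N} {L M : PGLine F N} (hLM : L ≠ M)
    (hPL : P.1 ≤ L.1) (hPM : P.1 ≤ M.1) (hQL : Q.1 ≤ L.1) (hQM : Q.1 ≤ M.1) : P = Q :=
  Subtype.ext <| Submodule.eq_of_le_inf_of_finrank_eq_one L.2 M.2 (Subtype.val_injective.ne hLM)
    P.2 Q.2 (le_inf hPL hPM) (le_inf hQL hQM)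

def ofVec (v : Fin (N + 1) → F) (hv : v ≠ 0) : PGPoint F N :=
  ⟨Submodule.span F {v}, finrank_span_singleton hv⟩

theorem ofVec_le_iff {v : Fin (N + 1) → F} (hv : v ≠ 0) {W : Submodule F (Fin (N + 1) → F)} :
    (ofVec v hv).1 ≤ W ↔ v ∈ W :=
  Submodule.span_singleton_le_iff_mem v W

theorem exists_le {W : Submodule F (Fin (N + 1) → F)} (hW : W ≠ ⊥) :
    ∃ P : PGPoint F N, P.1 ≤ W :=
  let ⟨v, hvW, hv⟩ := W.exists_mem_ne_zero_of_ne_bot hW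
  ⟨ofVec v hv, (ofVec_le_iff hv).2 hvW⟩

theorem exists_not_le {W : Submodule F (Fin (N + 1) → F)} (hW : W ≠ ⊤) :
    ∃ P : PGPoint F N, ¬ P.1 ≤ W := by
  obtain ⟨v, -, hv⟩ := SetLike.exists_of_lt (lt_top_iff_ne_top.2 hW)
  exact ⟨ofVec v (by rintro rfl; exact hv W.zero_mem), by rwa [ofVec_le_iff]⟩

end PGPoint

namespace PGLine

variable {F : Type} [Field F]

theorem ne_top (L : PGLine F 2) : L.1 ≠ ⊤ := by
  intro h
  have := L.2
  rw [h, finrank_top, Module.finrank_fin_fun] at this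
  omega

theorem exists_point_le_le (L M : PGLine F 2) :
    ∃ P : PGPoint F 2, P.1 ≤ L.1 ∧ P.1 ≤ M.1 := by
  have h := Submodule.one_le_finrank_inf (Module.finrank_fin_fun F) L.2 M.2
  obtain ⟨P, hP⟩ := PGPoint.exists_le (Submodule.one_le_finrank_iff.1 h)
  exact ⟨P, hP.trans inf_le_left, hP.trans inf_le_right⟩

theorem exists_not_le (Q : PGPoint F 2) : ∃ M : PGLine F 2, ¬ Q.1 ≤ M.1 := by
  obtain ⟨M, hM⟩ := Q.1.exists_isCompl
  have hMr : finrank F M = 2 := by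
    have h := Submodule.finrank_add_eq_of_isCompl hM
    rw [Q.2, Module.finrank_fin_fun] at h
    omega
  refine ⟨⟨M, hMr⟩, fun hQM => ?_⟩
  have hQ : Q.1 = ⊥ := le_bot_iff.1 (hM.inf_eq_bot ▸ le_inf le_rfl hQM)
  have := Q.2
  rw [hQ, finrank_bot] at this
  omega

end PGLine

section Counting

variable {F : Type} [Field F] [Fintype F]

theorem PGPoint.card (N : ℕ) :
    Nat.card (PGPoint F N) = ∑ i ∈ Finset.range (N + 1), Fintype.card F ^ i := by
  rw [← Nat.card_congr (Projectivization.equivSubmodule F (Fin (N + 1) → F)),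
    Projectivization.card_of_finrank F _ (Module.finrank_fin_fun F), Nat.card_eq_fintype_card]

theorem PGLine.ncard_points {N : ℕ} (L : PGLine F N) :
    {P : PGPoint F N | P.1 ≤ L.1}.ncard = Fintype.card F + 1 := by
  let f : {H : Submodule F L.1 // finrank F H = 1} → PGPoint F N :=
    fun H => ⟨H.1.map L.1.subtype, by rw [Submodule.finrank_map_subtype_eq, H.2]⟩
  have hf : Function.Injective f := fun H H' h =>
    Subtype.ext <|
      Submodule.map_injective_of_injective L.1.injective_subtype (congrArg Subtype.val h)
  have hrange : Set.range f = {P | P.1 ≤ L.1} := by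
    ext P
    refine ⟨?_, fun hP => ?_⟩
    · rintro ⟨H, rfl⟩
      exact Submodule.map_subtype_le _ _
    · have hmap : (P.1.comap L.1.subtype).map L.1.subtype = P.1 := by
        rw [Submodule.map_comap_subtype, inf_eq_right.2 hP]
      refine ⟨⟨P.1.comap L.1.subtype, ?_⟩, Subtype.ext hmap⟩
      rw [← Submodule.finrank_map_subtype_eq, hmap, P.2]
  rw [← hrange, Set.ncard_range_of_injective hf,
    ← Nat.card_congr (Projectivization.equivSubmodule F L.1),
    Projectivization.card_of_finrank_two F _ L.2, Nat.card_eq_fintype_card]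

theorem PGPoint.ncard_lines_through (Q : PGPoint F 2) :
    {L : PGLine F 2 | Q.1 ≤ L.1}.ncard = Fintype.card F + 1 := by
  obtain ⟨M, hQM⟩ := PGLine.exists_not_le Q
  have hne : ∀ P : {P : PGPoint F 2 | P.1 ≤ M.1}, Q ≠ P.1 := fun P h => hQM (h ▸ P.2)
  let f : {P : PGPoint F 2 | P.1 ≤ M.1} → PGLine F 2 := fun P => Q.join P.1 (hne P)
  have hfM : ∀ P, f P ≠ M := fun P h => hQM (h ▸ (le_sup_left : Q.1 ≤ (f P).1))
  have hf : Function.Injective f := fun P P' h =>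
    Subtype.ext (PGPoint.eq_of_le_of_le (hfM P) (le_sup_right : P.1.1 ≤ (f P).1) P.2
      (by rw [h]; exact le_sup_right) P'.2)
  have hrange : Set.range f = {L | Q.1 ≤ L.1} := by
    ext L
    refine ⟨?_, fun hQL => ?_⟩
    · rintro ⟨P, rfl⟩
      exact (le_sup_left : Q.1 ≤ (f P).1)
    · obtain ⟨P, hPL, hPM⟩ := PGLine.exists_point_le_le L M
      exact ⟨⟨P, hPM⟩, PGPoint.join_eq _ hQL hPL⟩
  rw [← hrange, Set.ncard_range_of_injective hf, Nat.card_coe_set_eq, M.ncard_points]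

theorem PGLine.ncard_points_not_le (L : PGLine F 2) :
    {P : PGPoint F 2 | ¬ P.1 ≤ L.1}.ncard = Fintype.card F ^ 2 := by
  rw [show {P : PGPoint F 2 | ¬ P.1 ≤ L.1} = {P | P.1 ≤ L.1}ᶜ from rfl, Set.ncard_compl,
    L.ncard_points, PGPoint.card, Finset.sum_range_succ, Finset.sum_range_succ,
    Finset.sum_range_one]
  simp only [pow_zero, pow_one]
  omega

end Counting

section PairCount

variable {F : Type} [Field F] [Fintype F] {N : ℕ}

theorem pairCount_eq_finsum (S : Set (PGPoint F N)) (Q : PGPoint F N) :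
    pairCount S Q = ∑ᶠ L ∈ {L : PGLine F N | Q.1 ≤ L.1}, (lineCount S L).choose 2 := by
  have hpairs : {e | ∃ A ∈ S, ∃ B ∈ S, A ≠ B ∧ e = {A, B} ∧ Q.1 ≤ A.1 ⊔ B.1} =
      ⋃ L ∈ {L : PGLine F N | Q.1 ≤ L.1},
        {e | e ⊆ {P | P ∈ S ∧ P.1 ≤ L.1} ∧ e.ncard = 2} := by
    ext e
    simp only [Set.mem_ofPred_eq, Set.mem_iUnion, exists_prop]
    constructor
    · rintro ⟨A, hA, B, hB, hAB, rfl, hQ⟩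
      refine ⟨A.join B hAB, hQ, ?_, Set.ncard_pair hAB⟩
      rintro P (rfl | rfl)
      exacts [⟨hA, le_sup_left⟩, ⟨hB, le_sup_right⟩]
    · rintro ⟨L, hQL, he, he2⟩
      obtain ⟨A, B, hAB, rfl⟩ := Set.ncard_eq_two.1 he2
      obtain ⟨⟨hA, hAL⟩, ⟨hB, hBL⟩⟩ := Set.pair_subset_iff.1 he
      refine ⟨A, hA, B, hB, hAB, rfl, ?_⟩
      rwa [← PGPoint.join_eq hAB hAL hBL] at hQL
  have hdisj : {L : PGLine F N | Q.1 ≤ L.1}.PairwiseDisjoint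
      fun L => {e | e ⊆ {P | P ∈ S ∧ P.1 ≤ L.1} ∧ e.ncard = 2} := by
    intro L _ L' _ hLL'
    refine Set.disjoint_left.2 fun e he he' => hLL' ?_
    obtain ⟨A, B, hAB, rfl⟩ := Set.ncard_eq_two.1 he.2
    obtain ⟨⟨-, hAL⟩, ⟨-, hBL⟩⟩ := Set.pair_subset_iff.1 he.1
    obtain ⟨⟨-, hAL'⟩, ⟨-, hBL'⟩⟩ := Set.pair_subset_iff.1 he'.1
    exact (PGPoint.join_eq hAB hAL hBL).symm.trans (PGPoint.join_eq hAB hAL' hBL')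
  rw [pairCount, hpairs,
    Set.Finite.ncard_biUnion (Set.toFinite _) (fun _ _ => Set.toFinite _) hdisj]
  exact finsum_mem_congr rfl fun L _ => Set.ncard_powerset_ncard (Set.toFinite _) 2

end PairCount

theorem finsum_mem_eq_add_mul {α : Type*} {s : Set α} (hs : s.Finite) {a : α} (ha : a ∈ s)
    {f : α → ℕ} {c : ℕ} (hf : ∀ x ∈ s, x ≠ a → f x = c) :
    ∑ᶠ x ∈ s, f x = f a + (s.ncard - 1) * c := by
  classical
  have ha' : a ∈ hs.toFinset := hs.mem_toFinset.2 ha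
  rw [finsum_mem_eq_finite_toFinset_sum f hs, ← Finset.add_sum_erase _ _ ha',
    Finset.sum_congr rfl fun x hx => hf x (hs.mem_toFinset.1 (Finset.mem_of_mem_erase hx))
      (Finset.ne_of_mem_erase hx),
    Finset.sum_const_nat fun _ _ => rfl, Finset.card_erase_of_mem ha',
    Set.ncard_eq_toFinset_card s hs]

theorem spans_of_setOf_not_le_subset {F : Type} [Field F] {N : ℕ}
    {W : Submodule F (Fin (N + 1) → F)} (hW : W ≠ ⊤) {S : Set (PGPoint F N)}
    (hS : {P | ¬ P.1 ≤ W} ⊆ S) : Spans S := by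
  have hmem : ∀ v ∉ W, v ∈ ⨆ P ∈ S, P.1 := fun v hv =>
    have hv0 : v ≠ 0 := by rintro rfl; exact hv W.zero_mem
    le_iSup₂ (f := fun P (_ : P ∈ S) => P.1) (PGPoint.ofVec v hv0)
      (hS ((PGPoint.ofVec_le_iff hv0).not.2 hv)) (Submodule.mem_span_singleton_self v)
  obtain ⟨w, -, hw⟩ := SetLike.exists_of_lt (lt_top_iff_ne_top.2 hW)
  rw [Spans, Submodule.eq_top_iff']
  intro v
  by_cases hv : v ∈ W
  · have hvw : v + w ∉ W := fun h => hw (by simpa using W.sub_mem h hv)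
    simpa using Submodule.sub_mem _ (hmem _ hvw) (hmem w hw)
  · exact hmem v hv

section LineComplement

variable {F : Type} [Field F] {ℓ : PGLine F 2} {T : Set (PGPoint F 2)}

theorem ncard_setOf_not_le_union [Fintype F] (hT : ∀ P ∈ T, P.1 ≤ ℓ.1) :
    ({P | ¬ P.1 ≤ ℓ.1} ∪ T).ncard = Fintype.card F ^ 2 + T.ncard := by
  have hdisj : Disjoint {P : PGPoint F 2 | ¬ P.1 ≤ ℓ.1} T :=
    Set.disjoint_left.2 fun P hP hPT => hP (hT P hPT)
  rw [Set.ncard_union_eq hdisj, ℓ.ncard_points_not_le]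

theorem lineCount_setOf_not_le_union_self (hT : ∀ P ∈ T, P.1 ≤ ℓ.1) :
    lineCount ({P | ¬ P.1 ≤ ℓ.1} ∪ T) ℓ = T.ncard := by
  refine congrArg Set.ncard (Set.ext fun P => ⟨?_, fun hP => ⟨Or.inr hP, hT P hP⟩⟩)
  rintro ⟨hP | hP, hPℓ⟩
  exacts [absurd hPℓ hP, hP]

theorem lineCount_setOf_not_le_union_of_ne [Fintype F] {Q : PGPoint F 2} (hQℓ : Q.1 ≤ ℓ.1)
    (hQT : Q ∉ T) {L : PGLine F 2} (hQL : Q.1 ≤ L.1) (hLℓ : L ≠ ℓ) :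
    lineCount ({P | ¬ P.1 ≤ ℓ.1} ∪ T) L = Fintype.card F := by
  have hon : ∀ P : PGPoint F 2, P.1 ≤ L.1 → P.1 ≤ ℓ.1 → P = Q := fun P hPL hPℓ =>
    PGPoint.eq_of_le_of_le hLℓ hPL hPℓ hQL hQℓ
  have hset :
      {P | P ∈ {P | ¬ P.1 ≤ ℓ.1} ∪ T ∧ P.1 ≤ L.1} = {P | P.1 ≤ L.1} \ {Q} := by
    ext P
    constructor
    · rintro ⟨hP | hP, hPL⟩
      exacts [⟨hPL, fun h => hP (h ▸ hQℓ)⟩, ⟨hPL, fun h => hQT (h ▸ hP)⟩]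
    · rintro ⟨hPL, hPQ⟩
      exact ⟨Or.inl fun hPℓ => hPQ (hon P hPL hPℓ), hPL⟩
  rw [lineCount, hset, Set.ncard_sdiff_singleton_of_mem hQL, L.ncard_points, Nat.add_sub_cancel]

theorem pairCount_setOf_not_le_union [Fintype F] (hT : ∀ P ∈ T, P.1 ≤ ℓ.1) {Q : PGPoint F 2}
    (hQ : Q ∉ {P | ¬ P.1 ≤ ℓ.1} ∪ T) :
    pairCount ({P | ¬ P.1 ≤ ℓ.1} ∪ T) Q =
      T.ncard.choose 2 + Fintype.card F * (Fintype.card F).choose 2 := by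
  have hQℓ : Q.1 ≤ ℓ.1 := not_not.1 fun h => hQ (Or.inl h)
  have hQT : Q ∉ T := fun h => hQ (Or.inr h)
  rw [pairCount_eq_finsum, finsum_mem_eq_add_mul (Set.toFinite _) hQℓ
      fun L hQL hLℓ => by rw [lineCount_setOf_not_le_union_of_ne hQℓ hQT hQL hLℓ],
    lineCount_setOf_not_le_union_self hT, Q.ncard_lines_through, Nat.add_sub_cancel]

theorem setOf_not_le_union_ne_univ [Fintype F] (hT : ∀ P ∈ T, P.1 ≤ ℓ.1)
    (hTcard : T.ncard ≤ Fintype.card F) : {P | ¬ P.1 ≤ ℓ.1} ∪ T ≠ Set.univ := by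
  intro h
  have := ncard_setOf_not_le_union hT
  rw [h, Set.ncard_univ, PGPoint.card] at this
  simp only [Finset.sum_range_succ, Finset.sum_range_zero, pow_zero, pow_one] at this
  omega

end LineComplement

theorem setOf_exists_line_through_ne_eq {F : Type} [Field F] {G : PGPoint F 2}
    {ℓ : PGLine F 2} (hGℓ : G.1 ≤ ℓ.1) :
    {P : PGPoint F 2 | ∃ m : PGLine F 2, G.1 ≤ m.1 ∧ m ≠ ℓ ∧ P.1 ≤ m.1} =
      insert G {P | ¬ P.1 ≤ ℓ.1} := by
  ext P
  constructor
  · rintro ⟨m, hGm, hmℓ, hPm⟩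
    by_cases hPℓ : P.1 ≤ ℓ.1
    · exact Or.inl (PGPoint.eq_of_le_of_le hmℓ hPm hPℓ hGm hGℓ)
    · exact Or.inr hPℓ
  · rintro (rfl | hPℓ)
    · obtain ⟨R, hR⟩ := PGPoint.exists_not_le ℓ.ne_top
      have hPR : P ≠ R := fun h => hR (h ▸ hGℓ)
      exact ⟨P.join R hPR, le_sup_left, fun h => hR (h ▸ le_sup_right), le_sup_left⟩
    · have hGP : G ≠ P := fun h => hPℓ (h ▸ hGℓ)
      exact ⟨G.join P hGP, le_sup_left, fun h => hPℓ (h ▸ le_sup_right), le_sup_right⟩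

theorem stmt_18_general (F : Type) [Field F] [Fintype F] (q b : ℕ)
    (hq : Fintype.card F = q) (hbq : b ≤ q - 1)
    (G : PGPoint F 2) (lstar : PGLine F 2) (hGl : G.1 ≤ lstar.1)
    (B : Set (PGPoint F 2)) (hB : ∀ P ∈ B, P.1 ≤ lstar.1 ∧ P ≠ G)
    (hBcard : B.ncard = b)
    (S : Set (PGPoint F 2))
    (hS : S = {P : PGPoint F 2 |
      ∃ m : PGLine F 2, G.1 ≤ m.1 ∧ m ≠ lstar ∧ P.1 ≤ m.1} ∪ B) :
    S.ncard = 1 + q ^ 2 + b ∧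
    (∀ Q : PGPoint F 2, Q ∉ S →
      pairCount S Q = Nat.choose (b + 1) 2 + q * Nat.choose q 2) ∧
    IsOS S (Nat.choose (b + 1) 2 + q * Nat.choose q 2) := by
  subst hq
  have hT : ∀ P ∈ insert G B, P.1 ≤ lstar.1 :=
    Set.forall_mem_insert.2 ⟨hGl, fun P hP => (hB P hP).1⟩
  have hTcard : (insert G B).ncard = b + 1 := by
    rw [Set.ncard_insert_of_notMem fun h => (hB G h).2 rfl, hBcard]
  have hq : 2 ≤ Fintype.card F := Fintype.one_lt_card
  rw [setOf_exists_line_through_ne_eq hGl, Set.insert_union, ← Set.union_insert] at hS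
  subst hS
  have hpair : ∀ Q ∉ {P : PGPoint F 2 | ¬ P.1 ≤ lstar.1} ∪ insert G B,
      pairCount ({P | ¬ P.1 ≤ lstar.1} ∪ insert G B) Q =
        (b + 1).choose 2 + Fintype.card F * (Fintype.card F).choose 2 := fun Q hQ => by
    rw [pairCount_setOf_not_le_union hT hQ, hTcard]
  refine ⟨by rw [ncard_setOf_not_le_union hT, hTcard]; ring, hpair,
    spans_of_setOf_not_le_subset lstar.ne_top Set.subset_union_left,
    setOf_not_le_union_ne_univ hT (by omega), hpair⟩

/-- Let `G` be a point of `PG(2,q)`, `ℓ*` one of the `q+1`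
lines through `G`, and `1 ≤ b ≤ q−1`. Let `S` be the union of the `q` lines
through `G` other than `ℓ*` together with `b` points of `ℓ* \ {G}`. Then
`#S = 1 + q² + b`, and every point `Q ∉ S` lies on exactly
`C(b+1,2) + q·C(q,2)` unordered pairs of distinct points of `S` collinear with
`Q`; hence `S` is a `(1, C(b+1,2)+q·C(q,2))`-OS set. -/
theorem stmt_18 (F : Type) [Field F] [Fintype F] (q b : ℕ)
    (hq : Fintype.card F = q) (hb1 : 1 ≤ b) (hbq : b ≤ q - 1)
    (G : PGPoint F 2) (lstar : PGLine F 2) (hGl : G.1 ≤ lstar.1)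
    (B : Set (PGPoint F 2)) (hB : ∀ P ∈ B, P.1 ≤ lstar.1 ∧ P ≠ G)
    (hBcard : B.ncard = b)
    (S : Set (PGPoint F 2))
    (hS : S = {P : PGPoint F 2 |
      ∃ m : PGLine F 2, G.1 ≤ m.1 ∧ m ≠ lstar ∧ P.1 ≤ m.1} ∪ B) :
    S.ncard = 1 + q ^ 2 + b ∧
    (∀ Q : PGPoint F 2, Q ∉ S →
      pairCount S Q = Nat.choose (b + 1) 2 + q * Nat.choose q 2) ∧
    IsOS S (Nat.choose (b + 1) 2 + q * Nat.choose q 2) :=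
  stmt_18_general F q b hq hbq G lstar hGl B hB hBcard S hS
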